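/- Let z_1, …, z_K ∈ ℝ^d (with d ≥ K ≥ 2) be unit vectors whose sum is zero, and let Z = [z_1, …, z_K] ∈ ℝ^{d×K}. If the Gram matrix ZᵀZ has effective rank K − 1, then ZᵀZ has eigenvalue K/(K−1) with multiplicity K − 1 and eigenvalue 0 with multiplicity 1; equivalently, there exists an orthogonal matrix Q ∈ ℝ^{K×K} such that Qᵀ(ZᵀZ)Q = (K/(K−1))·(I_K − (1/K)·1_K 1_Kᵀ). -/

import Mathlib

open Matrix MeasureTheory

/-- Principal matrix logarithm of a real symmetric matrix, defined via the spectral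
decomposition by applying `Real.log` to the eigenvalues (junk value `0` otherwise). -/
noncomputable def matrixLog {n : Type*} [Fintype n] [DecidableEq n]
    (A : Matrix n n ℝ) : Matrix n n ℝ :=
  if hA : A.IsHermitian then
    (hA.eigenvectorUnitary : Matrix n n ℝ) * Matrix.diagonal (Real.log ∘ hA.eigenvalues) *
      star (hA.eigenvectorUnitary : Matrix n n ℝ)
  else 0

/-- Matrix KL divergence `MKL(P‖Q) = tr(P log P − P log Q − P + Q)`. -/
noncomputable def MKL {n : Type*} [Fintype n] [DecidableEq n]
    (P Q : Matrix n n ℝ) : ℝ :=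
  (P * matrixLog P - P * matrixLog Q - P + Q).trace

/-- Matrix cross-entropy `MCE(P, Q) = tr(−P log Q + Q)`. -/
noncomputable def MCE {n : Type*} [Fintype n] [DecidableEq n]
    (P Q : Matrix n n ℝ) : ℝ :=
  (-(P * matrixLog Q) + Q).trace

/-- Effective rank of a symmetric matrix (junk value `0` if not Hermitian), defined as the
exponential of the Shannon entropy of the normalized eigenvalue distribution; note that
`Real.log 0 = 0` in Mathlib, implementing the convention `0 · log 0 = 0`. -/
noncomputable def erank {n : Type*} [Fintype n] [DecidableEq n]
    (A : Matrix n n ℝ) : ℝ :=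
  if hA : A.IsHermitian then
    Real.exp (-∑ i, (hA.eigenvalues i / ∑ k, hA.eigenvalues k) *
      Real.log (hA.eigenvalues i / ∑ k, hA.eigenvalues k))
  else 0

/-- Total coding rate loss `L_TCR(Z) = −(1/2)·log det(I_d + (d/(Bε²))·ZZᵀ)`. -/
noncomputable def LTCR {d B : ℕ} (ε : ℝ) (Z : Matrix (Fin d) (Fin B) ℝ) : ℝ :=
  -(1 / 2) * Real.log ((1 + ((d : ℝ) / (B * ε ^ 2)) • (Z * Zᵀ)).det)

/-!
The Gram matrix `A = ZᵀZ` is positive semidefinite with unit diagonal, so its trace is `K`, and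
`A 1 = 0`, so one eigenvalue vanishes. The normalized spectrum `λ / K` is then a probability vector
supported on at most `K − 1` points; its entropy is at most `log (K − 1)`, with equality (which is
what `erank A = K − 1` says) only for the uniform distribution, by strict concavity of
`x ↦ −x log x`. Hence `A = c (I − v vᵀ)` with `c = K/(K−1)` and `v` a zero-eigenvector, and
`A 1 = 0` forces `v` to be parallel to `1`, so `v vᵀ = 1 1ᵀ / K`: the Gram matrix is exactly the
simplex ETF Gram matrix, and `Q = I` works.
-/

open Real Finset

theorem eq_inv_card_of_sum_negMulLog_eq_log_card {ι : Type*} {s : Finset ι} {p : ι → ℝ}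
    (hp : ∀ i ∈ s, 0 ≤ p i) (hsum : ∑ i ∈ s, p i = 1)
    (hent : ∑ i ∈ s, negMulLog (p i) = log #s) :
    ∀ i ∈ s, p i = (#s : ℝ)⁻¹ := by
  have hcard : (0 : ℝ) < #s := by
    have : s.Nonempty := nonempty_of_sum_ne_zero (by rw [hsum]; exact one_ne_zero)
    exact_mod_cast this.card_pos
  have hw : ∑ _i ∈ s, (#s : ℝ)⁻¹ = 1 := by
    rw [sum_const, nsmul_eq_mul, mul_inv_cancel₀ hcard.ne']
  have hmean : ∑ i ∈ s, (#s : ℝ)⁻¹ • p i = (#s : ℝ)⁻¹ := by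
    rw [← smul_sum, hsum, smul_eq_mul, mul_one]
  have hjensen := strictConcaveOn_negMulLog.map_sum_eq_iff (fun _ _ => inv_pos.2 hcard) hw
    (fun i hi => Set.mem_Ici.2 (hp i hi))
  rw [hmean, ← smul_sum, hent, negMulLog, log_inv, smul_eq_mul] at hjensen
  exact hjensen.1 (by ring)

theorem Matrix.trace_transpose_mul_self_eq_card {m n R : Type*} [Fintype m] [Fintype n]
    [CommSemiring R] (Z : Matrix m n R) (hunit : ∀ j, ∑ i, Z i j ^ 2 = 1) :
    (Zᵀ * Z).trace = Fintype.card n := by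
  simp [trace, mul_apply, ← sq, hunit]

theorem Matrix.vecMulVec_self_eq_of_mulVec_one {n 𝕜 : Type*} [Fintype n] [DecidableEq n]
    [Field 𝕜] {v : n → 𝕜} (h : (1 - vecMulVec v v) *ᵥ 1 = 0) :
    vecMulVec v v = (Fintype.card n : 𝕜)⁻¹ • of fun _ _ => 1 := by
  set s := ∑ i, v i
  have hvs : ∀ i, v i * s = 1 := fun i => by
    have := congrFun h i
    simp only [sub_mulVec, one_mulVec, vecMulVec_mulVec, Pi.sub_apply, Pi.smul_apply,
      MulOpposite.smul_eq_mul_unop, MulOpposite.unop_op, Pi.one_apply, Pi.zero_apply,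
      dotProduct_one] at this
    linear_combination -this
  have hss : s * s = Fintype.card n := by
    rw [sum_mul, sum_congr rfl fun i _ => hvs i, sum_const, card_univ, nsmul_one]
  ext i j
  rw [vecMulVec_apply, smul_apply, of_apply, smul_eq_mul, mul_one]
  refine eq_inv_of_mul_eq_one_left ?_
  rw [← hss]
  linear_combination (v j * s) * hvs i + hvs j

namespace Matrix.IsHermitian

variable {n : Type*} [Fintype n] [DecidableEq n] {A : Matrix n n ℝ} (hA : A.IsHermitian)

theorem exists_eigenvalues_eq_zero {x : n → ℝ} (hx : x ≠ 0) (hAx : A *ᵥ x = 0) :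
    ∃ i, hA.eigenvalues i = 0 := by
  have hdet : A.det = 0 := exists_mulVec_eq_zero_iff.1 ⟨x, hx, hAx⟩
  rw [hA.det_eq_prod_eigenvalues] at hdet
  simpa using prod_eq_zero_iff.1 hdet

theorem exists_eq_smul_one_sub_vecMulVec {i₀ : n} {c : ℝ}
    (hμ : ∀ i, hA.eigenvalues i = if i = i₀ then 0 else c) :
    ∃ v : n → ℝ, A = c • (1 - vecMulVec v v) := by
  have hD : diagonal (RCLike.ofReal ∘ hA.eigenvalues) =
      c • (1 - diagonal (Pi.single i₀ (1 : ℝ))) := by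
    ext i j
    by_cases hij : i = j <;> by_cases hi : i = i₀ <;> simp_all
  refine ⟨hA.eigenvectorBasis i₀, ?_⟩
  conv_lhs => rw [hA.spectral_theorem, Unitary.conjStarAlgAut_apply, hD]
  rw [mul_smul_comm, smul_mul_assoc, mul_sub, sub_mul, mul_one,
    Unitary.mul_star_self_of_mem hA.eigenvectorUnitary.2]
  congr 2
  ext i j
  simp [mul_apply, diagonal_apply, Pi.single_apply, vecMulVec_apply]

theorem trace_eq_sum_eigenvalues_real : A.trace = ∑ i, hA.eigenvalues i := by
  simpa using hA.trace_eq_sum_eigenvalues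

theorem erank_eq_exp_sum_negMulLog :
    erank A = Real.exp (∑ i, negMulLog (hA.eigenvalues i / A.trace)) := by
  simp only [erank, dif_pos hA, hA.trace_eq_sum_eigenvalues_real, negMulLog, ← sum_neg_distrib,
    neg_mul]

end Matrix.IsHermitian

theorem Matrix.PosSemidef.eigenvalues_eq_of_erank_eq {n : Type*} [Fintype n] [DecidableEq n]
    {A : Matrix n n ℝ} (hA : A.PosSemidef) {i₀ : n} (hi₀ : hA.1.eigenvalues i₀ = 0)
    (htr : A.trace ≠ 0) (herank : erank A = Fintype.card n - 1) (i : n) :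
    hA.1.eigenvalues i = if i = i₀ then 0 else A.trace / (Fintype.card n - 1) := by
  set p := fun i => hA.1.eigenvalues i / A.trace
  have hcard : (#(univ.erase i₀) : ℝ) = Fintype.card n - 1 := by
    rw [card_erase_of_mem (mem_univ _), card_univ, Nat.cast_pred (Fintype.card_pos_iff.2 ⟨i₀⟩)]
  have hsum : ∑ i ∈ univ.erase i₀, p i = 1 := by
    rw [sum_erase _ (by simp [p, hi₀]), ← sum_div, ← hA.1.trace_eq_sum_eigenvalues_real,
      div_self htr]
  have hent : ∑ i ∈ univ.erase i₀, negMulLog (p i) = log #(univ.erase i₀) := by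
    rw [sum_erase _ (by simp [p, hi₀]), hcard, ← herank, hA.1.erank_eq_exp_sum_negMulLog, log_exp]
  have huniform := eq_inv_card_of_sum_negMulLog_eq_log_card
    (fun i _ => div_nonneg (hA.eigenvalues_nonneg i) hA.trace_nonneg) hsum hent
  split_ifs with h
  · rw [h, hi₀]
  · have : hA.1.eigenvalues i / A.trace = _ := huniform i (mem_erase.2 ⟨h, mem_univ i⟩)
    rw [hcard, div_eq_iff htr] at this
    rw [this, inv_mul_eq_div]

theorem max_erank_gram_etf_general {d K : ℕ} (hK : 2 ≤ K)
    (Z : Matrix (Fin d) (Fin K) ℝ)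
    (hunit : ∀ j, ∑ i, (Z i j) ^ 2 = 1) (hsum : ∀ i, ∑ j, Z i j = 0)
    (herank : erank (Zᵀ * Z) = (K : ℝ) - 1) :
    ∃ Q : Matrix (Fin K) (Fin K) ℝ, Qᵀ * Q = 1 ∧
      Qᵀ * (Zᵀ * Z) * Q = ((K : ℝ) / ((K : ℝ) - 1)) •
        ((1 : Matrix (Fin K) (Fin K) ℝ) - (K : ℝ)⁻¹ • Matrix.of (fun _ _ => (1 : ℝ))) := by
  set A := Zᵀ * Z
  have hA : A.PosSemidef := posSemidef_conjTranspose_mul_self Z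
  have hK1 : (1 : ℝ) < K := by exact_mod_cast hK
  have : NeZero K := ⟨by omega⟩
  have htr : A.trace = K := by simpa using trace_transpose_mul_self_eq_card Z hunit
  have hker : A *ᵥ 1 = 0 := by
    have hZ : Z *ᵥ 1 = 0 := funext fun i => by simpa [mulVec, dotProduct] using hsum i
    rw [← mulVec_mulVec, hZ, mulVec_zero]
  obtain ⟨i₀, hi₀⟩ := hA.1.exists_eigenvalues_eq_zero one_ne_zero hker
  have hμ := hA.eigenvalues_eq_of_erank_eq hi₀ (by rw [htr]; positivity)
    (by rwa [Fintype.card_fin])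
  rw [htr, Fintype.card_fin] at hμ
  obtain ⟨v, hv⟩ := hA.1.exists_eq_smul_one_sub_vecMulVec hμ
  have hvv : vecMulVec v v = (K : ℝ)⁻¹ • of fun _ _ => 1 := by
    rw [hv, smul_mulVec, smul_eq_zero] at hker
    simpa using vecMulVec_self_eq_of_mulVec_one
      (hker.resolve_left (div_ne_zero (by positivity) (by linarith)))
  refine ⟨1, by simp, ?_⟩
  rw [transpose_one, one_mul, mul_one, hv, hvv]

/-- Let `z_1, …, z_K ∈ ℝ^d` (with `d ≥ K ≥ 2`) be unit vectors summing to
zero, assembled as the columns of `Z ∈ ℝ^{d×K}`. If `erank(ZᵀZ) = K − 1`, then there is an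
orthogonal `Q` with `Qᵀ(ZᵀZ)Q = (K/(K−1))·(I_K − (1/K)·1_K1_Kᵀ)` (equivalently, `ZᵀZ` has
eigenvalue `K/(K−1)` with multiplicity `K − 1` and eigenvalue `0` with multiplicity `1`). -/
theorem max_erank_gram_etf {d K : ℕ} (hK : 2 ≤ K) (hd : K ≤ d)
    (Z : Matrix (Fin d) (Fin K) ℝ)
    (hunit : ∀ j, ∑ i, (Z i j) ^ 2 = 1) (hsum : ∀ i, ∑ j, Z i j = 0)
    (herank : erank (Zᵀ * Z) = (K : ℝ) - 1) :
    ∃ Q : Matrix (Fin K) (Fin K) ℝ, Qᵀ * Q = 1 ∧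
      Qᵀ * (Zᵀ * Z) * Q = ((K : ℝ) / ((K : ℝ) - 1)) •
        ((1 : Matrix (Fin K) (Fin K) ℝ) - (K : ℝ)⁻¹ • Matrix.of (fun _ _ => (1 : ℝ))) :=
  max_erank_gram_etf_general hK Z hunit hsum herank
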